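/- Define fA (x₁, x₂) = (−x₁/8 − x₂, 2x₁ − x₂/8) and fB (x₁, x₂) = (−x₁/8 − 2x₂, x₁ − x₂/8) on ℝ × ℝ, with domains QA = {(x₁, x₂) : x₁·x₂ ≤ 0} for fA and QB = {(x₁, x₂) : x₁·x₂ ≥ 0} for fB. The origin is stable for the state-dependent switched system: for every ε > 0 there exists δ > 0 such that for every ω with ‖ω‖ < δ and every ν reachable from ω in the reflexive-transitive closure of the union of the fA-flow relation with domain QA and the fB-flow relation with domain QB, ‖ν‖ < ε. -/

import Mathlib

/-- The vector field `fA (x₁, x₂) = (−x₁/8 − x₂, 2x₁ − x₂/8)`. -/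
noncomputable def fA (x : ℝ × ℝ) : ℝ × ℝ := (-x.1 / 8 - x.2, 2 * x.1 - x.2 / 8)

/-- The vector field `fB (x₁, x₂) = (−x₁/8 − 2x₂, x₁ − x₂/8)`. -/
noncomputable def fB (x : ℝ × ℝ) : ℝ × ℝ := (-x.1 / 8 - 2 * x.2, x.1 - x.2 / 8)

/-- Domain for `fA`: `x₁·x₂ ≤ 0`. -/
def QA : Set (ℝ × ℝ) := {x : ℝ × ℝ | x.1 * x.2 ≤ 0}

/-- Domain for `fB`: `x₁·x₂ ≥ 0`. -/
def QB : Set (ℝ × ℝ) := {x : ℝ × ℝ | x.1 * x.2 ≥ 0}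

/-- The flow relation for a vector field `g` on `ℝ × ℝ` with domain `Q`. -/
def FlowRel (g : ℝ × ℝ → ℝ × ℝ) (Q : Set (ℝ × ℝ)) (ω ν : ℝ × ℝ) : Prop :=
  ∃ t : ℝ, 0 ≤ t ∧ ∃ φ : ℝ → ℝ × ℝ, φ 0 = ω ∧ φ t = ν ∧
    ∀ s ∈ Set.Icc (0 : ℝ) t, HasDerivWithinAt φ (g (φ s)) (Set.Icc (0 : ℝ) t) s ∧ φ s ∈ Q

/-- The Euclidean norm on `ℝ × ℝ`. -/
noncomputable def enorm2 (x : ℝ × ℝ) : ℝ := Real.sqrt (x.1 ^ 2 + x.2 ^ 2)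

/-!
`W(x) = x₁² + x₂² + |x₁x₂|/4` is a common Lyapunov function. On `QA` it is the quadratic form
`x₁² + x₂² − x₁x₂/4`, whose derivative along `fA` is `−¾x₁² + (33/16)x₁x₂ ≤ 0` there; on `QB` it is
`x₁² + x₂² + x₁x₂/4`, whose derivative along `fB` is `−¾x₂² − (33/16)x₁x₂ ≤ 0` there. So `W` never
increases along a switched trajectory, and `‖x‖² ≤ W(x) ≤ (9/8)‖x‖²` gives stability with `δ = ε/2`.
-/

def quadLyapunov (c : ℝ) (x : ℝ × ℝ) : ℝ := x.1 ^ 2 + x.2 ^ 2 + c * (x.1 * x.2)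

noncomputable def quadLyapunovDeriv (c : ℝ) (x : ℝ × ℝ) : ℝ × ℝ →L[ℝ] ℝ :=
  (2 * x.1 + c * x.2) • ContinuousLinearMap.fst ℝ ℝ ℝ +
    (2 * x.2 + c * x.1) • ContinuousLinearMap.snd ℝ ℝ ℝ

@[simp]
lemma quadLyapunovDeriv_apply (c : ℝ) (x v : ℝ × ℝ) :
    quadLyapunovDeriv c x v = (2 * x.1 + c * x.2) * v.1 + (2 * x.2 + c * x.1) * v.2 := by
  simp [quadLyapunovDeriv]

lemma hasFDerivAt_quadLyapunov (c : ℝ) (x : ℝ × ℝ) :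
    HasFDerivAt (quadLyapunov c) (quadLyapunovDeriv c x) x := by
  have h₁ : HasFDerivAt (fun x : ℝ × ℝ => x.1) (ContinuousLinearMap.fst ℝ ℝ ℝ) x :=
    hasFDerivAt_fst
  have h₂ : HasFDerivAt (fun x : ℝ × ℝ => x.2) (ContinuousLinearMap.snd ℝ ℝ ℝ) x :=
    hasFDerivAt_snd
  have h := ((h₁.pow 2).add (h₂.pow 2)).add ((h₁.mul h₂).const_mul c)
  exact h.congr_fderiv (by ext <;> simp)

lemma FlowRel.mem {g : ℝ × ℝ → ℝ × ℝ} {Q : Set (ℝ × ℝ)} {ω ν : ℝ × ℝ}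
    (h : FlowRel g Q ω ν) : ω ∈ Q ∧ ν ∈ Q := by
  obtain ⟨t, ht, φ, rfl, rfl, hφ⟩ := h
  exact ⟨(hφ 0 ⟨le_rfl, ht⟩).2, (hφ t ⟨ht, le_rfl⟩).2⟩

lemma FlowRel.le_of_hasFDerivAt {g : ℝ × ℝ → ℝ × ℝ} {Q : Set (ℝ × ℝ)} {V : ℝ × ℝ → ℝ}
    {V' : ℝ × ℝ → ℝ × ℝ →L[ℝ] ℝ} (hV : ∀ x, HasFDerivAt V (V' x) x)
    (hQ : ∀ x ∈ Q, V' x (g x) ≤ 0) {ω ν : ℝ × ℝ} (h : FlowRel g Q ω ν) : V ν ≤ V ω := by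
  obtain ⟨t, ht, φ, rfl, rfl, hφ⟩ := h
  have hderiv : ∀ s ∈ Set.Icc 0 t,
      HasDerivWithinAt (V ∘ φ) (V' (φ s) (g (φ s))) (Set.Icc 0 t) s := fun s hs =>
    (hV (φ s)).comp_hasDerivWithinAt s (hφ s hs).1
  have hanti : AntitoneOn (V ∘ φ) (Set.Icc 0 t) :=
    antitoneOn_of_hasDerivWithinAt_nonpos (convex_Icc 0 t)
      (fun s hs => (hderiv s hs).continuousWithinAt)
      (fun s hs => (hderiv s (interior_subset hs)).mono interior_subset)
      (fun s hs => hQ _ (hφ s (interior_subset hs)).2)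
  exact hanti ⟨le_rfl, ht⟩ ⟨ht, le_rfl⟩ ht

lemma quadLyapunovDeriv_fA_nonpos {x : ℝ × ℝ} (hx : x ∈ QA) :
    quadLyapunovDeriv (-1 / 4) x (fA x) ≤ 0 := by
  have hx : x.1 * x.2 ≤ 0 := hx
  simp only [quadLyapunovDeriv_apply, fA]
  nlinarith [sq_nonneg x.1]

lemma quadLyapunovDeriv_fB_nonpos {x : ℝ × ℝ} (hx : x ∈ QB) :
    quadLyapunovDeriv (1 / 4) x (fB x) ≤ 0 := by
  have hx : 0 ≤ x.1 * x.2 := hx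
  simp only [quadLyapunovDeriv_apply, fB]
  nlinarith [sq_nonneg x.1, sq_nonneg x.2]

noncomputable def switchedLyapunov (x : ℝ × ℝ) : ℝ := x.1 ^ 2 + x.2 ^ 2 + |x.1 * x.2| / 4

lemma switchedLyapunov_eq_of_mem_QA {x : ℝ × ℝ} (hx : x ∈ QA) :
    switchedLyapunov x = quadLyapunov (-1 / 4) x := by
  rw [switchedLyapunov, quadLyapunov, abs_of_nonpos hx]
  ring

lemma switchedLyapunov_eq_of_mem_QB {x : ℝ × ℝ} (hx : x ∈ QB) :
    switchedLyapunov x = quadLyapunov (1 / 4) x := by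
  rw [switchedLyapunov, quadLyapunov, abs_of_nonneg hx]
  ring

lemma switchedLyapunov_le_of_reachable {ω ν : ℝ × ℝ}
    (h : Relation.ReflTransGen (fun a b => FlowRel fA QA a b ∨ FlowRel fB QB a b) ω ν) :
    switchedLyapunov ν ≤ switchedLyapunov ω := by
  induction h with
  | refl => exact le_rfl
  | tail _ hstep ih =>
    refine le_trans ?_ ih
    rcases hstep with hA | hB
    · rw [switchedLyapunov_eq_of_mem_QA hA.mem.1, switchedLyapunov_eq_of_mem_QA hA.mem.2]
      exact hA.le_of_hasFDerivAt (hasFDerivAt_quadLyapunov _)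
        fun _ => quadLyapunovDeriv_fA_nonpos
    · rw [switchedLyapunov_eq_of_mem_QB hB.mem.1, switchedLyapunov_eq_of_mem_QB hB.mem.2]
      exact hB.le_of_hasFDerivAt (hasFDerivAt_quadLyapunov _)
        fun _ => quadLyapunovDeriv_fB_nonpos

lemma enorm2_sq (x : ℝ × ℝ) : enorm2 x ^ 2 = x.1 ^ 2 + x.2 ^ 2 :=
  Real.sq_sqrt (by positivity)

lemma enorm2_sq_le_switchedLyapunov (x : ℝ × ℝ) : enorm2 x ^ 2 ≤ switchedLyapunov x := by
  rw [enorm2_sq, switchedLyapunov]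
  linarith [abs_nonneg (x.1 * x.2)]

lemma switchedLyapunov_le_enorm2_sq (x : ℝ × ℝ) :
    switchedLyapunov x ≤ 9 / 8 * enorm2 x ^ 2 := by
  rw [enorm2_sq, switchedLyapunov]
  have : |x.1 * x.2| ≤ (x.1 ^ 2 + x.2 ^ 2) / 2 := by
    rw [abs_le]
    constructor <;> nlinarith [sq_nonneg (x.1 + x.2), sq_nonneg (x.1 - x.2)]
  linarith

theorem origin_stable_state_dependent_switching :
    ∀ ε : ℝ, 0 < ε → ∃ δ : ℝ, 0 < δ ∧
      ∀ ω : ℝ × ℝ, enorm2 ω < δ →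
        ∀ ν : ℝ × ℝ,
          Relation.ReflTransGen (fun a b => FlowRel fA QA a b ∨ FlowRel fB QB a b) ω ν →
          enorm2 ν < ε := by
  intro ε hε
  refine ⟨ε / 2, by positivity, fun ω hω ν hreach => ?_⟩
  have hω_sq : enorm2 ω ^ 2 < (ε / 2) ^ 2 :=
    pow_lt_pow_left₀ hω (Real.sqrt_nonneg _) two_ne_zero
  have hν_sq : enorm2 ν ^ 2 < ε ^ 2 := calc
    enorm2 ν ^ 2 ≤ switchedLyapunov ν := enorm2_sq_le_switchedLyapunov ν
    _ ≤ switchedLyapunov ω := switchedLyapunov_le_of_reachable hreach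
    _ ≤ 9 / 8 * enorm2 ω ^ 2 := switchedLyapunov_le_enorm2_sq ω
    _ < ε ^ 2 := by nlinarith
  exact lt_of_pow_lt_pow_left₀ 2 hε.le hν_sq
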